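/- Let F(x,y) = Re ∫₀^x √(((u−x)² + y²)(u−1)/u) du and G(x,y) = −∫₀¹ y²·√(1−t²)·Im √(1 − 1/(x + i t y)) dt, with √ the principal branch of the complex square root, and Σ⁺ = { x + i y : y > 0, F(x,y) + G(x,y) = 0 }. Then arg(z) → π/2 as z → ∞ along Σ⁺: for every ε > 0 there exists R > 0 such that every z ∈ Σ⁺ with |z| > R satisfies |arg(z) − π/2| < ε. -/

import Mathlib

open Complex

/-! ### Auxiliary lemmas about the principal complex square root -/

lemma re_cpow_half_nonneg (w : ℂ) : 0 ≤ (w ^ (1/2 : ℂ)).re := by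
  rcases eq_or_ne w 0 with rfl | hw
  · rw [Complex.zero_cpow (by norm_num)]; simp
  · rw [Complex.cpow_def_of_ne_zero hw, Complex.exp_re]
    have him : (Complex.log w * (1/2 : ℂ)).im = Complex.arg w / 2 := by
      simp [Complex.mul_im, Complex.log_im]; ring
    rw [him]
    have h1 := Complex.neg_pi_lt_arg w
    have h2 := Complex.arg_le_pi w
    have := Real.pi_pos
    have hcos : 0 ≤ Real.cos (Complex.arg w / 2) :=
      Real.cos_nonneg_of_mem_Icc ⟨by linarith, by linarith⟩
    positivity

lemma im_cpow_half_nonneg {w : ℂ} (h : 0 ≤ w.im) : 0 ≤ (w ^ (1/2 : ℂ)).im := by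
  rcases eq_or_ne w 0 with rfl | hw
  · rw [Complex.zero_cpow (by norm_num)]; simp
  · rw [Complex.cpow_def_of_ne_zero hw, Complex.exp_im]
    have him : (Complex.log w * (1/2 : ℂ)).im = Complex.arg w / 2 := by
      simp [Complex.mul_im, Complex.log_im]; ring
    rw [him]
    have h1 : 0 ≤ Complex.arg w := Complex.arg_nonneg_iff.2 h
    have h2 := Complex.arg_le_pi w
    have := Real.pi_pos
    have hsin : 0 ≤ Real.sin (Complex.arg w / 2) :=
      Real.sin_nonneg_of_nonneg_of_le_pi (by linarith) (by linarith)
    positivity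

lemma im_cpow_half_pos {w : ℂ} (h : 0 < w.im) : 0 < (w ^ (1/2 : ℂ)).im := by
  have hw : w ≠ 0 := by intro hw; rw [hw] at h; simp at h
  rw [Complex.cpow_def_of_ne_zero hw, Complex.exp_im]
  have him : (Complex.log w * (1/2 : ℂ)).im = Complex.arg w / 2 := by
    simp [Complex.mul_im, Complex.log_im]; ring
  rw [him]
  have h1 : 0 ≤ Complex.arg w := Complex.arg_nonneg_iff.2 h.le
  have h1' : Complex.arg w ≠ 0 := by
    intro h0
    rcases Complex.arg_eq_zero_iff.1 h0 with ⟨-, h2⟩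
    rw [h2] at h; exact lt_irrefl 0 h
  have h2 := Complex.arg_le_pi w
  have := Real.pi_pos
  have hsin : 0 < Real.sin (Complex.arg w / 2) :=
    Real.sin_pos_of_pos_of_lt_pi (by cases h1.lt_or_eq with
      | inl h => linarith
      | inr h => exact absurd h.symm h1') (by linarith)
  positivity

lemma im_cpow_half_le {w : ℂ} (hre : 1/4 ≤ w.re) (him : 0 ≤ w.im) :
    (w ^ (1/2 : ℂ)).im ≤ w.im := by
  set s := w ^ (1/2 : ℂ) with hs
  have hsq : s ^ 2 = w := by
    rw [hs, one_div]
    exact Complex.cpow_ofNat_inv_pow w 2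
  have ha : 0 ≤ s.re := re_cpow_half_nonneg w
  have hb : 0 ≤ s.im := im_cpow_half_nonneg him
  have hre' : w.re = s.re ^ 2 - s.im ^ 2 := by
    rw [← hsq]; simp [pow_two, Complex.mul_re]
  have him' : w.im = 2 * s.re * s.im := by
    rw [← hsq]; simp [pow_two, Complex.mul_im]; ring
  have ha2 : 1/2 ≤ s.re := by nlinarith
  nlinarith

lemma re_ofReal_cpow_half {W : ℝ} (h : 0 ≤ W) :
    (((W : ℂ)) ^ (1/2 : ℂ)).re = Real.sqrt W := by
  have hc : ((1/2 : ℝ) : ℂ) = (1/2 : ℂ) := by norm_num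
  rw [← hc, ← Complex.ofReal_cpow h (1/2 : ℝ), Complex.ofReal_re, Real.sqrt_eq_rpow]

/-! ### The statement's definitions -/

/-- `F(x,y) = Re ∫₀^x √(((u-x)² + y²)(u-1)/u) du`, principal complex square root. -/
noncomputable def Ffun (x y : ℝ) : ℝ :=
  (∫ u in (0 : ℝ)..x,
    ((((u : ℂ) - (x : ℂ)) ^ 2 + (y : ℂ) ^ 2) * ((u : ℂ) - 1) / (u : ℂ)) ^ (1/2 : ℂ)).re

/-- `G(x,y) = -∫₀¹ y²√(1-t²)·Im √(1 - 1/(x+ity)) dt`. -/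
noncomputable def Gfun (x y : ℝ) : ℝ :=
  -∫ t in (0 : ℝ)..1, y ^ 2 * Real.sqrt (1 - t ^ 2) *
    (((1 : ℂ) - 1 / ((x : ℂ) + (t : ℂ) * (y : ℂ) * Complex.I)) ^ (1/2 : ℂ)).im

/-- The upper half-plane branch set `Σ⁺ = { x + iy : y > 0, F(x,y) + G(x,y) = 0 }`. -/
def SigmaPlus : Set ℂ := {z : ℂ | 0 < z.im ∧ Ffun z.re z.im + Gfun z.re z.im = 0}

/-! ### Lemmas about the `G` integrand -/

lemma dre (x y t : ℝ) : ((x : ℂ) + (t : ℂ) * (y : ℂ) * Complex.I).re = x := by simp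
lemma dim (x y t : ℝ) : ((x : ℂ) + (t : ℂ) * (y : ℂ) * Complex.I).im = t * y := by simp
lemma dnormSq (x y t : ℝ) :
    Complex.normSq ((x : ℂ) + (t : ℂ) * (y : ℂ) * Complex.I) = x^2 + (t*y)^2 := by
  rw [Complex.normSq_apply, dre, dim]; ring

lemma gim (x y t : ℝ) : ((1 : ℂ) - 1 / ((x : ℂ) + (t : ℂ) * (y : ℂ) * Complex.I)).im
    = t * y / (x^2 + (t*y)^2) := by
  rw [Complex.sub_im, Complex.one_im, one_div, Complex.inv_im, dim, dnormSq]
  ring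

lemma gre (x y t : ℝ) : ((1 : ℂ) - 1 / ((x : ℂ) + (t : ℂ) * (y : ℂ) * Complex.I)).re
    = 1 - x / (x^2 + (t*y)^2) := by
  rw [Complex.sub_re, Complex.one_re, one_div, Complex.inv_re, dre, dnormSq]

lemma G_cont {x y : ℝ} (hy : 0 < y) (hx : x < 0 ∨ 1 < x) :
    ContinuousOn (fun t : ℝ => y ^ 2 * Real.sqrt (1 - t ^ 2) *
      (((1 : ℂ) - 1 / ((x : ℂ) + (t : ℂ) * (y : ℂ) * Complex.I)) ^ (1/2 : ℂ)).im)
      (Set.Icc (0:ℝ) 1) := by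
  have hx0 : x ≠ 0 := by rcases hx with h | h <;> intro h0 <;> rw [h0] at h <;> linarith
  intro t ht
  apply ContinuousAt.continuousWithinAt
  have hd : ((x : ℂ) + (t : ℂ) * (y : ℂ) * Complex.I) ≠ 0 := by
    intro h0
    have := congrArg Complex.re h0
    rw [dre] at this; simp at this; exact hx0 this
  have hcd : ContinuousAt (fun s : ℝ => ((x : ℂ) + (s : ℂ) * (y : ℂ) * Complex.I)) t := by
    fun_prop
  have hcw : ContinuousAt (fun s : ℝ =>
      (1 : ℂ) - 1 / ((x : ℂ) + (s : ℂ) * (y : ℂ) * Complex.I)) t := by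
    exact continuousAt_const.sub (continuousAt_const.div hcd hd)
  have hslit : ((1 : ℂ) - 1 / ((x : ℂ) + (t : ℂ) * (y : ℂ) * Complex.I)) ∈ Complex.slitPlane := by
    rw [Complex.mem_slitPlane_iff]
    rcases hx with hneg | hbig
    · left
      rw [gre]
      have hden : 0 < x^2 + (t*y)^2 := by positivity
      have : x / (x^2 + (t*y)^2) < 0 := div_neg_of_neg_of_pos (by linarith) hden
      linarith
    · rcases eq_or_lt_of_le ht.1 with h0 | h0
      · left
        rw [gre, ← h0]
        have hx1 : 0 < x := by linarith
        have hpos : 0 < x ^ 2 + (0*y) ^ 2 := by nlinarith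
        have h2 : x / (x ^ 2 + (0*y) ^ 2) < 1 := by
          rw [div_lt_one hpos]; nlinarith
        linarith
      · right
        rw [gim]
        have : 0 < t * y / (x^2 + (t*y)^2) := by positivity
        linarith
  have hcpow : ContinuousAt (fun s : ℝ =>
      ((1 : ℂ) - 1 / ((x : ℂ) + (s : ℂ) * (y : ℂ) * Complex.I)) ^ (1/2 : ℂ)) t :=
    hcw.cpow continuousAt_const hslit
  exact (continuousAt_const.mul ((Real.continuous_sqrt.continuousAt).comp
    (by fun_prop))).mul (Complex.continuous_im.continuousAt.comp hcpow)

lemma G_neg {x y : ℝ} (hy : 0 < y) (hx : x < 0 ∨ 1 < x) : Gfun x y < 0 := by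
  have hint : IntervalIntegrable (fun t : ℝ => y ^ 2 * Real.sqrt (1 - t ^ 2) *
      (((1 : ℂ) - 1 / ((x : ℂ) + (t : ℂ) * (y : ℂ) * Complex.I)) ^ (1/2 : ℂ)).im)
      MeasureTheory.volume 0 1 := by
    apply ContinuousOn.intervalIntegrable
    rw [Set.uIcc_of_le (by norm_num)]
    exact G_cont hy hx
  have hpos : 0 < ∫ t in (0:ℝ)..1, y ^ 2 * Real.sqrt (1 - t ^ 2) *
      (((1 : ℂ) - 1 / ((x : ℂ) + (t : ℂ) * (y : ℂ) * Complex.I)) ^ (1/2 : ℂ)).im := by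
    apply intervalIntegral.intervalIntegral_pos_of_pos_on hint _ (by norm_num)
    intro t ht
    have h1 : 0 < Real.sqrt (1 - t^2) := Real.sqrt_pos.2 (by nlinarith [ht.1, ht.2])
    have h2 : 0 < (((1 : ℂ) - 1 / ((x : ℂ) + (t : ℂ) * (y : ℂ) * Complex.I)) ^ (1/2 : ℂ)).im := by
      apply im_cpow_half_pos
      rw [gim]
      have hty : 0 < t * y := mul_pos ht.1 hy
      have hden : 0 < x^2 + (t*y)^2 := by nlinarith [sq_nonneg x]
      exact div_pos hty hden
    positivity
  rw [Gfun]; linarith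

lemma negG_ub {x y : ℝ} (hy : 0 < y) (hx : 4 ≤ x) : -Gfun x y ≤ y^2 / (2*x) := by
  have hxpos : (0:ℝ) < x := by linarith
  have hbound : ∀ t ∈ Set.uIoc (0:ℝ) 1,
      ‖y ^ 2 * Real.sqrt (1 - t ^ 2) *
        (((1 : ℂ) - 1 / ((x : ℂ) + (t : ℂ) * (y : ℂ) * Complex.I)) ^ (1/2 : ℂ)).im‖
        ≤ y^2 / (2*x) := by
    intro t ht
    rw [Set.uIoc_of_le (by norm_num)] at ht
    have ht0 : 0 < t := ht.1
    have ht1 : t ≤ 1 := ht.2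
    have hty : 0 < t * y := mul_pos ht0 hy
    have hden : 0 < x^2 + (t*y)^2 := by positivity
    have himw : 0 ≤ ((1 : ℂ) - 1 / ((x : ℂ) + (t : ℂ) * (y : ℂ) * Complex.I)).im := by
      rw [gim]; positivity
    have hrew : 1/4 ≤ ((1 : ℂ) - 1 / ((x : ℂ) + (t : ℂ) * (y : ℂ) * Complex.I)).re := by
      rw [gre]
      have h1 : x / (x^2 + (t*y)^2) ≤ 3/4 := by
        rw [div_le_iff₀ hden]
        nlinarith [sq_nonneg (t*y)]
      linarith
    have hims : 0 ≤ (((1 : ℂ) - 1 / ((x : ℂ) + (t : ℂ) * (y : ℂ) * Complex.I)) ^ (1/2 : ℂ)).im :=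
      im_cpow_half_nonneg himw
    have hle1 : (((1 : ℂ) - 1 / ((x : ℂ) + (t : ℂ) * (y : ℂ) * Complex.I)) ^ (1/2 : ℂ)).im
        ≤ ((1 : ℂ) - 1 / ((x : ℂ) + (t : ℂ) * (y : ℂ) * Complex.I)).im :=
      im_cpow_half_le hrew himw
    have hle2 : ((1 : ℂ) - 1 / ((x : ℂ) + (t : ℂ) * (y : ℂ) * Complex.I)).im ≤ 1/(2*x) := by
      rw [gim, div_le_div_iff₀ hden (by positivity)]
      nlinarith [sq_nonneg (x - t*y)]
    have hsq : Real.sqrt (1 - t^2) ≤ 1 := by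
      calc Real.sqrt (1 - t^2) ≤ Real.sqrt 1 := Real.sqrt_le_sqrt (by nlinarith)
        _ = 1 := Real.sqrt_one
    have hsqnn : 0 ≤ Real.sqrt (1 - t^2) := Real.sqrt_nonneg _
    rw [Real.norm_eq_abs, _root_.abs_of_nonneg (by positivity)]
    calc y ^ 2 * Real.sqrt (1 - t ^ 2) *
        (((1 : ℂ) - 1 / ((x : ℂ) + (t : ℂ) * (y : ℂ) * Complex.I)) ^ (1/2 : ℂ)).im
        ≤ y ^ 2 * 1 * (1/(2*x)) := by
          apply mul_le_mul _ (le_trans hle1 hle2) hims (by positivity)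
          nlinarith [sq_nonneg y]
      _ = y^2 / (2*x) := by ring
  have hnorm := intervalIntegral.norm_integral_le_of_norm_le_const hbound
  rw [Gfun, neg_neg]
  calc (∫ t in (0:ℝ)..1, y ^ 2 * Real.sqrt (1 - t ^ 2) *
        (((1 : ℂ) - 1 / ((x : ℂ) + (t : ℂ) * (y : ℂ) * Complex.I)) ^ (1/2 : ℂ)).im)
      ≤ ‖∫ t in (0:ℝ)..1, y ^ 2 * Real.sqrt (1 - t ^ 2) *
        (((1 : ℂ) - 1 / ((x : ℂ) + (t : ℂ) * (y : ℂ) * Complex.I)) ^ (1/2 : ℂ)).im‖ :=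
        le_abs_self _
    _ ≤ y^2/(2*x) * |1 - 0| := hnorm
    _ = y^2 / (2*x) := by simp

/-! ### Lemmas about `F` -/

lemma F_nonpos {x y : ℝ} (hx : x ≤ 0) : Ffun x y ≤ 0 := by
  set f : ℝ → ℂ := fun u =>
    ((((u : ℂ) - (x : ℂ)) ^ 2 + (y : ℂ) ^ 2) * ((u : ℂ) - 1) / (u : ℂ)) ^ (1/2 : ℂ) with hf
  by_cases hi : IntervalIntegrable f MeasureTheory.volume 0 x
  · have hi' : IntervalIntegrable f MeasureTheory.volume x 0 := hi.symm
    have hcomm := Complex.reCLM.intervalIntegral_comp_comm hi'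
    have h1 : Ffun x y = -∫ u in x..(0:ℝ), (f u).re := by
      rw [Ffun, intervalIntegral.integral_symm]
      have : (Complex.reCLM (∫ u in x..(0:ℝ), f u)) = (∫ u in x..(0:ℝ), f u).re := rfl
      rw [Complex.neg_re, ← this, ← hcomm]
      rfl
    rw [h1, neg_nonpos]
    apply intervalIntegral.integral_nonneg hx
    intro u _
    exact re_cpow_half_nonneg _
  · rw [Ffun, intervalIntegral.integral_undef hi]; simp

lemma F_lb {x y : ℝ} (hx : 4 ≤ x)
    (hi : IntervalIntegrable (fun u : ℝ =>
      ((((u : ℂ) - (x : ℂ)) ^ 2 + (y : ℂ) ^ 2) * ((u : ℂ) - 1) / (u : ℂ)) ^ (1/2 : ℂ))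
      MeasureTheory.volume 0 x) :
    x^2 / 24 ≤ Ffun x y := by
  set f : ℝ → ℂ := fun u =>
    ((((u : ℂ) - (x : ℂ)) ^ 2 + (y : ℂ) ^ 2) * ((u : ℂ) - 1) / (u : ℂ)) ^ (1/2 : ℂ) with hf
  have hre : IntervalIntegrable (fun u => (f u).re) MeasureTheory.volume 0 x :=
    ⟨hi.1.re, hi.2.re⟩
  have hFeq : Ffun x y = ∫ u in (0:ℝ)..x, (f u).re := by
    rw [Ffun]
    exact (Complex.reCLM.intervalIntegral_comp_comm hi).symm
  have hsub1 : Set.uIcc (0:ℝ) (x/2) ⊆ Set.uIcc (0:ℝ) x := by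
    rw [Set.uIcc_of_le (by linarith), Set.uIcc_of_le (by linarith)]
    exact Set.Icc_subset_Icc le_rfl (by linarith)
  have hsub2 : Set.uIcc (x/2) (3*x/4) ⊆ Set.uIcc (0:ℝ) x := by
    rw [Set.uIcc_of_le (by linarith), Set.uIcc_of_le (by linarith)]
    exact Set.Icc_subset_Icc (by linarith) (by linarith)
  have hsub3 : Set.uIcc (3*x/4) x ⊆ Set.uIcc (0:ℝ) x := by
    rw [Set.uIcc_of_le (by linarith), Set.uIcc_of_le (by linarith)]
    exact Set.Icc_subset_Icc (by linarith) (by linarith)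
  have h1 := hre.mono_set hsub1
  have h2 := hre.mono_set hsub2
  have h3 := hre.mono_set hsub3
  have hsplit : (∫ u in (0:ℝ)..(x/2), (f u).re) + (∫ u in (x/2)..(3*x/4), (f u).re)
      + (∫ u in (3*x/4)..x, (f u).re) = ∫ u in (0:ℝ)..x, (f u).re := by
    rw [intervalIntegral.integral_add_adjacent_intervals h1 h2,
      intervalIntegral.integral_add_adjacent_intervals (h1.trans h2) h3]
  have hnn1 : 0 ≤ ∫ u in (0:ℝ)..(x/2), (f u).re :=
    intervalIntegral.integral_nonneg (by linarith) (fun u _ => re_cpow_half_nonneg _)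
  have hnn3 : 0 ≤ ∫ u in (3*x/4)..x, (f u).re :=
    intervalIntegral.integral_nonneg (by linarith) (fun u _ => re_cpow_half_nonneg _)
  have hmid : x^2/24 ≤ ∫ u in (x/2)..(3*x/4), (f u).re := by
    have hconst : (∫ _u in (x/2)..(3*x/4), x/6) = x^2/24 := by
      rw [intervalIntegral.integral_const, smul_eq_mul]; ring
    rw [← hconst]
    apply intervalIntegral.integral_mono_on (by linarith)
      (intervalIntegrable_const) h2
    intro u hu
    have hu1 : x/2 ≤ u := hu.1
    have hu2 : u ≤ 3*x/4 := hu.2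
    have hu0 : 2 ≤ u := by linarith
    have hupos : 0 < u := by linarith
    set W : ℝ := ((u - x)^2 + y^2) * (u - 1) / u with hW
    have hWc : (((u : ℂ) - (x : ℂ)) ^ 2 + (y : ℂ) ^ 2) * ((u : ℂ) - 1) / (u : ℂ)
        = ((W : ℝ) : ℂ) := by
      rw [hW]; push_cast; ring
    have hWnn : 0 ≤ W := by
      rw [hW]
      apply div_nonneg _ hupos.le
      apply mul_nonneg (by positivity) (by linarith)
    have hfre : (f u).re = Real.sqrt W := by
      rw [hf]; simp only; rw [hWc, re_ofReal_cpow_half hWnn]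
    rw [hfre]
    have hWlb : (x/6)^2 ≤ W := by
      rw [hW]
      rw [le_div_iff₀ hupos]
      have ha : (x/4)^2 ≤ (u-x)^2 + y^2 := by nlinarith [sq_nonneg y]
      have hb : u/2 ≤ u - 1 := by linarith
      have hc := mul_le_mul ha hb (by linarith) (by positivity)
      nlinarith [mul_nonneg (sq_nonneg x) hupos.le]
    have h6 : 0 ≤ x/6 := by linarith
    calc x/6 = Real.sqrt ((x/6)^2) := by rw [Real.sqrt_sq h6]
      _ ≤ Real.sqrt W := Real.sqrt_le_sqrt hWlb
  linarith [hFeq, hsplit]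

/-- In the sector `x` large compared with `y`, `F + G > 0`. -/
lemma H_ne {x y : ℝ} (hy : 0 < y) (hx : 4 ≤ x) (hxy : 12 * y^2 < x^3) :
    Ffun x y + Gfun x y ≠ 0 := by
  intro heq
  have hG := G_neg (x := x) hy (Or.inr (by linarith : (1:ℝ) < x))
  have hFpos : 0 < Ffun x y := by linarith
  have hi : IntervalIntegrable (fun u : ℝ =>
      ((((u : ℂ) - (x : ℂ)) ^ 2 + (y : ℂ) ^ 2) * ((u : ℂ) - 1) / (u : ℂ)) ^ (1/2 : ℂ))
      MeasureTheory.volume 0 x := by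
    by_contra h
    rw [Ffun, intervalIntegral.integral_undef h] at hFpos
    simp at hFpos
  have hFlb := F_lb hx hi
  have hGub := negG_ub hy hx
  have hxpos : (0:ℝ) < x := by linarith
  have hkey : x^2/24 ≤ y^2/(2*x) := by linarith
  rw [div_le_div_iff₀ (by norm_num) (by positivity)] at hkey
  nlinarith

/-- `arg z → π/2` as `z → ∞` along `Σ⁺`. -/
theorem stmt_14 :
    ∀ ε > (0 : ℝ), ∃ R > (0 : ℝ), ∀ z ∈ SigmaPlus,
      ‖z‖ > R → |Complex.arg z - Real.pi / 2| < ε := by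
  intro ε hε
  have hpi := Real.pi_pos
  set ε' : ℝ := min (ε/2) (Real.pi/4) with hε'
  have hε'pos : 0 < ε' := lt_min (by linarith) (by linarith)
  have hε'lt : ε' < Real.pi/2 := lt_of_le_of_lt (min_le_right _ _) (by linarith)
  set c : ℝ := Real.sin ε' with hcdef
  have hc : 0 < c := Real.sin_pos_of_pos_of_lt_pi hε'pos (by linarith)
  have hc1 : c ≤ 1 := Real.sin_le_one _
  refine ⟨(13 + 12/c^2)/c, by positivity, ?_⟩
  rintro z ⟨hy, heq⟩ hR
  have hzne : z ≠ 0 := by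
    intro h0
    rw [h0] at hR
    simp at hR
    have : 0 < (13 + 12/c^2)/c := by positivity
    linarith
  have habs : 0 < ‖z‖ := by
    have : 0 < (13 + 12/c^2)/c := by positivity
    linarith
  set x := z.re with hx
  set y := z.im with hyy
  rcases lt_trichotomy x 0 with hx0 | hx0 | hx0
  · -- x < 0 : impossible
    exact absurd heq (by
      have h1 := F_nonpos (y := y) hx0.le
      have h2 := G_neg hy (Or.inl hx0)
      intro h; linarith)
  · -- x = 0 : arg z = π/2
    have : Complex.arg z = Real.pi/2 := Complex.arg_eq_pi_div_two_iff.2 ⟨hx0.symm ▸ rfl, hy⟩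
    rw [this]
    simpa using hε
  · -- x > 0
    by_cases hxc : x < c * ‖z‖
    · -- close to the imaginary axis : direct angle estimate
      have hcos : Real.cos (Complex.arg z) = x / ‖z‖ := Complex.cos_arg hzne
      have h1 : Real.cos (Complex.arg z) < c := by
        rw [hcos, div_lt_iff₀ habs]; linarith [hxc]
      have harg0 : 0 ≤ Complex.arg z := Complex.arg_nonneg_iff.2 hy.le
      have harg2 : Complex.arg z ≤ Real.pi/2 :=
        Complex.arg_le_pi_div_two_iff.2 (Or.inl hx0.le)
      have harggt : Real.pi/2 - ε' < Complex.arg z := by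
        by_contra h
        push_neg at h
        have h2 : c ≤ Real.cos (Complex.arg z) := by
          have := Real.cos_le_cos_of_nonneg_of_le_pi harg0 (by linarith) h
          rwa [Real.cos_pi_div_two_sub] at this
        linarith
      have : |Complex.arg z - Real.pi/2| = Real.pi/2 - Complex.arg z := by
        rw [abs_of_nonpos (by linarith)]; ring
      rw [this]
      have : ε' ≤ ε/2 := min_le_left _ _
      linarith
    · -- in the sector : contradiction with F + G = 0
      exfalso
      push_neg at hxc
      have hx13 : 13 + 12/c^2 < x := by
        have h1 : c * ((13 + 12/c^2)/c) = 13 + 12/c^2 := by field_simp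
        have h2 : c * ((13 + 12/c^2)/c) < c * ‖z‖ :=
          mul_lt_mul_of_pos_left hR hc
        linarith [hxc, h2.trans_le (le_of_eq rfl)]
      have hy_le : y ≤ ‖z‖ := le_trans (le_abs_self _) (Complex.abs_im_le_norm z)
      have hy_le2 : c * y ≤ x := le_trans (mul_le_mul_of_nonneg_left hy_le hc.le) hxc
      have h12 : (0:ℝ) < 12/c^2 := by positivity
      have hx4 : 4 ≤ x := by linarith
      apply H_ne hy hx4 _ heq
      -- 12 y² < x³
      have hcy : y ≤ x/c := by rw [le_div_iff₀ hc]; linarith [hy_le2]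
      have hy2 : y^2 ≤ (x/c)^2 := by
        apply sq_le_sq' _ hcy
        nlinarith [hy.le, hc, div_nonneg (by linarith : (0:ℝ) ≤ x) hc.le]
      have hc2 : 0 < c^2 := by positivity
      have hxc2 : 12/c^2 < x := by linarith
      calc 12 * y^2 ≤ 12 * (x/c)^2 := by linarith
        _ = (12/c^2) * x^2 := by rw [div_pow]; ring
        _ < x * x^2 := by
          apply mul_lt_mul_of_pos_right hxc2 (by positivity)
        _ = x^3 := by ring
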